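/- For the discounted return difference: if for every t, |E_{p_t}[r] - E_{q_t}[r]| ≤ 2 r_max ε_t where ε_t = D_TV[p_t, q_t], and the ε_t satisfy ε_t ≤ ε_{t-1} + δ_t with ε_0 = 0, then |Σ_{t=0}^∞ γ^t E_{p_t}[r] - Σ_{t=0}^∞ γ^t E_{q_t}[r]| ≤ (2 r_max/(1-γ)) Σ_{t=1}^∞ γ^t δ_t, provided Σ_{t=1}^∞ γ^t δ_t < ∞. -/

import Mathlib

/-- Total-variation distance between two pmfs on a finite type. -/
noncomputable def tv {X : Type*} [Fintype X] (f g : X → ℝ) : ℝ :=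
  (1 / 2) * ∑ x, |f x - g x|

/-!
Telescoping gives `ε_t ≤ δ_1 + ⋯ + δ_t`, so the `t`-th discounted reward gap is at most
`2 r_max γ^t (δ_1 + ⋯ + δ_t)`. Summing over `t` is a Cauchy product of `∑ γ^t δ_t` with the
geometric series `∑ γ^t = 1/(1-γ)`.
-/

open Finset

lemma abs_sum_mul_le_of_abs_le {X : Type*} [Fintype X] {r f : X → ℝ} {C : ℝ}
    (hr : ∀ x, |r x| ≤ C) (hf0 : ∀ x, 0 ≤ f x) (hf1 : ∑ x, f x = 1) :
    |∑ x, r x * f x| ≤ C :=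
  calc |∑ x, r x * f x| ≤ ∑ x, |r x| * f x := by
        simpa only [abs_mul, abs_of_nonneg (hf0 _)] using
          abs_sum_le_sum_abs (fun x => r x * f x) univ
    _ ≤ ∑ x, C * f x := sum_le_sum fun x _ => mul_le_mul_of_nonneg_right (hr x) (hf0 x)
    _ = C := by rw [← mul_sum, hf1, mul_one]

lemma summable_pow_mul_of_abs_le {γ C : ℝ} {c : ℕ → ℝ} (hγ0 : 0 ≤ γ) (hγ1 : γ < 1)
    (hc : ∀ t, |c t| ≤ C) : Summable fun t => γ ^ t * c t :=
  ((summable_geometric_of_lt_one hγ0 hγ1).mul_right C).of_norm_bounded fun t => by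
    rw [norm_mul, norm_pow, Real.norm_of_nonneg hγ0, Real.norm_eq_abs]
    exact mul_le_mul_of_nonneg_left (hc t) (pow_nonneg hγ0 t)

lemma le_sum_range_of_le_add {ε d : ℕ → ℝ} (h0 : ε 0 ≤ d 0)
    (hstep : ∀ t, ε (t + 1) ≤ ε t + d (t + 1)) (n : ℕ) :
    ε n ≤ ∑ k ∈ range (n + 1), d k := by
  induction n with
  | zero => simpa using h0
  | succ n ih => rw [sum_range_succ]; linarith [hstep n]

lemma hasSum_pow_mul_sum_range {γ : ℝ} {d : ℕ → ℝ} (hγ0 : 0 ≤ γ) (hγ1 : γ < 1)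
    (hd : Summable fun k => γ ^ k * d k) :
    HasSum (fun n => γ ^ n * ∑ k ∈ range (n + 1), d k)
      ((∑' k, γ ^ k * d k) / (1 - γ)) := by
  have hgeo := summable_geometric_of_lt_one hγ0 hγ1
  have hcauchy :=
    hasSum_sum_range_mul_of_summable_norm (f := fun k => γ ^ k * d k) (g := (γ ^ ·))
    (by simpa only [Real.norm_eq_abs] using hd.abs)
    (by simpa only [Real.norm_eq_abs] using hgeo.abs)
  rw [tsum_geometric_of_lt_one hγ0 hγ1, ← div_eq_mul_inv] at hcauchy
  refine hcauchy.congr_fun fun n => ?_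
  rw [mul_sum]
  refine sum_congr rfl fun k hk => ?_
  rw [← pow_sub_mul_pow γ (Nat.le_of_lt_succ (mem_range.mp hk))]
  ring

lemma abs_tsum_sub_tsum_le_of_hasSum {ι : Type*} {a b c : ι → ℝ} {C : ℝ}
    (ha : Summable a) (hb : Summable b) (hc : HasSum c C) (h : ∀ i, |a i - b i| ≤ c i) :
    |∑' i, a i - ∑' i, b i| ≤ C := by
  rw [← ha.tsum_sub hb]
  exact tsum_of_norm_bounded (f := fun i => a i - b i) hc h

theorem stmt_15_general {X : Type*} [Fintype X]
    (p q : ℕ → X → ℝ)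
    (hp0 : ∀ t x, 0 ≤ p t x) (hq0 : ∀ t x, 0 ≤ q t x)
    (hp1 : ∀ t, ∑ x, p t x = 1) (hq1 : ∀ t, ∑ x, q t x = 1)
    (r : X → ℝ) (rmax : ℝ) (hr : ∀ x, |r x| ≤ rmax)
    (γ : ℝ) (hγ : γ ∈ Set.Ioo (0 : ℝ) 1)
    (δ : ℕ → ℝ)
    (hgap : ∀ t, |(∑ x, r x * p t x) - ∑ x, r x * q t x|
      ≤ 2 * rmax * tv (p t) (q t))
    (hε0 : tv (p 0) (q 0) = 0)
    (hεstep : ∀ t : ℕ, 1 ≤ t → tv (p t) (q t) ≤ tv (p (t - 1)) (q (t - 1)) + δ t)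
    (hsum : Summable fun t : ℕ => γ ^ t * δ t) :
    |(∑' t : ℕ, γ ^ t * ∑ x, r x * p t x) - ∑' t : ℕ, γ ^ t * ∑ x, r x * q t x|
      ≤ (2 * rmax / (1 - γ)) * ∑' t : ℕ, if 1 ≤ t then γ ^ t * δ t else 0 := by
  obtain ⟨hγ0, hγ1⟩ := hγ
  have hrmax : 0 ≤ rmax := by
    obtain ⟨x⟩ : Nonempty X := by
      by_contra h
      simpa [not_nonempty_iff.mp h] using hp1 0
    exact (abs_nonneg _).trans (hr x)
  set d : ℕ → ℝ := fun k => if 1 ≤ k then δ k else 0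
  have hd : (fun k => γ ^ k * d k) = fun k => if 1 ≤ k then γ ^ k * δ k else 0 := by
    simp only [d, mul_ite, mul_zero]
  have hε (t : ℕ) : tv (p t) (q t) ≤ ∑ k ∈ range (t + 1), d k :=
    le_sum_range_of_le_add (ε := fun t => tv (p t) (q t)) (by simp [d, hε0])
      (fun t => by simpa [d] using hεstep (t + 1) (by omega)) t
  have hd_summable : Summable fun k => γ ^ k * d k := by
    rw [hd]
    exact hsum.abs.of_norm_bounded fun k => by
      split_ifs <;> simp only [norm_zero, Real.norm_eq_abs, le_refl, abs_nonneg]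
  have hS := (hasSum_pow_mul_sum_range hγ0.le hγ1 hd_summable).mul_left (2 * rmax)
  rw [hd, ← mul_div_assoc, mul_div_right_comm] at hS
  refine abs_tsum_sub_tsum_le_of_hasSum
    (summable_pow_mul_of_abs_le hγ0.le hγ1 fun t => abs_sum_mul_le_of_abs_le hr (hp0 t) (hp1 t))
    (summable_pow_mul_of_abs_le hγ0.le hγ1 fun t => abs_sum_mul_le_of_abs_le hr (hq0 t) (hq1 t))
    hS fun t => ?_
  calc |γ ^ t * ∑ x, r x * p t x - γ ^ t * ∑ x, r x * q t x|
      = γ ^ t * |∑ x, r x * p t x - ∑ x, r x * q t x| := by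
        rw [← mul_sub, abs_mul, abs_of_nonneg (pow_nonneg hγ0.le t)]
    _ ≤ γ ^ t * (2 * rmax * ∑ k ∈ range (t + 1), d k) := by
        gcongr
        exact (hgap t).trans (by gcongr; exact hε t)
    _ = 2 * rmax * (γ ^ t * ∑ k ∈ range (t + 1), d k) := by ring

/-- If the per-step expectation gaps are bounded by `2 r_max ε_t` with
`ε_t = D_TV[p_t, q_t]`, `ε_0 = 0`, and `ε_t ≤ ε_{t-1} + δ_t`, then the
discounted returns differ by at most `(2 r_max/(1-γ)) Σ_{t≥1} γ^t δ_t`. -/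
theorem stmt_15 {X : Type*} [Fintype X]
    (p q : ℕ → X → ℝ)
    (hp0 : ∀ t x, 0 ≤ p t x) (hq0 : ∀ t x, 0 ≤ q t x)
    (hp1 : ∀ t, ∑ x, p t x = 1) (hq1 : ∀ t, ∑ x, q t x = 1)
    (r : X → ℝ) (rmax : ℝ) (hr : ∀ x, |r x| ≤ rmax)
    (γ : ℝ) (hγ : γ ∈ Set.Ioo (0 : ℝ) 1)
    (δ : ℕ → ℝ) (hδ : ∀ t, 1 ≤ t → 0 ≤ δ t)
    (hgap : ∀ t, |(∑ x, r x * p t x) - ∑ x, r x * q t x|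
      ≤ 2 * rmax * tv (p t) (q t))
    (hε0 : tv (p 0) (q 0) = 0)
    (hεstep : ∀ t : ℕ, 1 ≤ t → tv (p t) (q t) ≤ tv (p (t - 1)) (q (t - 1)) + δ t)
    (hsum : Summable fun t : ℕ => γ ^ t * δ t) :
    |(∑' t : ℕ, γ ^ t * ∑ x, r x * p t x) - ∑' t : ℕ, γ ^ t * ∑ x, r x * q t x|
      ≤ (2 * rmax / (1 - γ)) * ∑' t : ℕ, if 1 ≤ t then γ ^ t * δ t else 0 :=
  stmt_15_general p q hp0 hq0 hp1 hq1 r rmax hr γ hγ δ hgap hε0 hεstep hsum
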